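/- Let x_1 < ... < x_k be a D-diffsequence of positive integers. Then the distinct values among pos(x_1) ≤ pos(x_2) ≤ ... ≤ pos(x_k), listed in increasing order, form a D-diffsequence; that is, consecutive distinct values of pos(x_i) differ by a power of 2. -/

import Mathlib

/-- The set of powers of two. -/
def D : Set ℕ := {d | ∃ i : ℕ, d = 2 ^ i}

/-- `pos i = ⌈i / 4⌉`. -/
def pos (i : ℕ) : ℕ := (i + 3) / 4

/-- The expansion of a binary string: each `0` becomes `0011`, each `1` becomes `1100`.
For `1 ≤ m`, `s⁽¹⁾_m = s_{⌈m/4⌉}` if `m % 4 ∈ {1,2}` and `1 - s_{⌈m/4⌉}` otherwise. -/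
def expand (s : ℕ → Fin 2) : ℕ → Fin 2 :=
  fun m => if m % 4 = 1 ∨ m % 4 = 2 then s (pos m) else 1 - s (pos m)

/-- `a 0 < a 1 < ⋯ < a (k-1)` is a `D`-diffsequence contained in `{1, …, n}`. -/
def IsDiffseqIn (n k : ℕ) (a : ℕ → ℕ) : Prop :=
  (∀ i < k, 1 ≤ a i ∧ a i ≤ n) ∧
    ∀ i, i + 1 < k → a i < a (i + 1) ∧ a (i + 1) - a i ∈ D

/-- The set of hops of a length-`k` diffsequence `a` with respect to the string `s`:
indices `j` (0-based) with `a (j+1) - a j = 1` and `s (a (j+1)) ≠ s (a j)`. -/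
def hops (s : ℕ → Fin 2) (k : ℕ) (a : ℕ → ℕ) : Finset ℕ :=
  (Finset.range (k - 1)).filter fun j => a (j + 1) = a j + 1 ∧ s (a (j + 1)) ≠ s (a j)

/-- `psi s n h` : the maximum length of a `D`-diffsequence contained in `{1, …, n}`
with at most `h` hops with respect to `s` (0 if there is none). -/
noncomputable def psi (s : ℕ → Fin 2) (n h : ℕ) : ℕ :=
  sSup {k | ∃ a : ℕ → ℕ, IsDiffseqIn n k a ∧ (hops s k a).card ≤ h}

/-!
A step `x (i+1) - x i = 2 ^ j` with `j ≥ 2` is a multiple of `4`, so it shifts `pos` by exactly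
`2 ^ (j - 2)`; a step of `1` or `2` shifts the ceiling `pos` by at most `1 = 2 ^ 0`. Hence
consecutive values of the monotone sequence `pos (x i)` are equal or differ by a power of two, and
this survives removing the repetitions, which leaves the distinct values in increasing order.
-/

lemma pos_mono : Monotone pos := fun _ _ h => Nat.div_le_div_right (by omega)

lemma pos_add_four_mul (a m : ℕ) : pos (a + 4 * m) = pos a + m := by
  unfold pos; omega

lemma pos_sub_pos_mem_D {a b : ℕ} (hab : a < b) (hd : b - a ∈ D) (hne : pos a ≠ pos b) :
    pos b - pos a ∈ D := by
  obtain ⟨j, hj⟩ := hd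
  match j with
  | 0 | 1 => exact ⟨0, by simp only [pos, pow_zero, pow_one] at hj hne ⊢; omega⟩
  | j + 2 =>
    have hb : b = a + 4 * 2 ^ j := by rw [pow_add] at hj; omega
    exact ⟨j, by rw [hb, pos_add_four_mul]; omega⟩

namespace List

variable {α : Type*}

theorem head?_destutter' (R : α → α → Prop) [DecidableRel R] (a : α) (l : List α) :
    (l.destutter' R a).head? = some a := by
  induction l with
  | nil => rfl
  | cons b l ih => rw [destutter'_cons]; split_ifs <;> simp [ih]

variable [DecidableEq α] {R : α → α → Prop}

theorem IsChain.destutter'_ne {a : α} {l : List α}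
    (h : (a :: l).IsChain fun x y => x ≠ y → R x y) :
    (l.destutter' (· ≠ ·) a).IsChain R := by
  induction l generalizing a with
  | nil => simp
  | cons b l ih =>
    obtain ⟨hab, hl⟩ := isChain_cons_cons.mp h
    by_cases heq : a = b
    · subst heq
      rw [destutter'_cons_neg _ (not_not.2 rfl)]
      exact ih hl
    · rw [destutter'_cons_pos _ heq, List.isChain_cons, head?_destutter']
      exact ⟨by simpa using hab heq, ih hl⟩

theorem IsChain.destutter_ne {l : List α} (h : l.IsChain fun x y => x ≠ y → R x y) :
    (l.destutter (· ≠ ·)).IsChain R := by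
  cases l with
  | nil => simp
  | cons a l => exact h.destutter'_ne

theorem Pairwise.sort_toFinset_eq_destutter {β : Type*} [LinearOrder β] {l : List β}
    (h : l.Pairwise (· ≤ ·)) : l.toFinset.sort (· ≤ ·) = l.destutter (· ≠ ·) := by
  have hdedup : l.dedup.toFinset = l.toFinset := by ext; simp
  rw [h.destutter_eq_dedup, ← hdedup]
  exact (toFinset_sort _ (nodup_dedup l)).2 (h.sublist (dedup_sublist l))

end List

theorem stmt_13_general (k : ℕ) (x : ℕ → ℕ)
    (hdiff : ∀ i, i + 1 < k → x i < x (i + 1) ∧ x (i + 1) - x i ∈ D) :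
    List.Chain' (fun a b => b - a ∈ D)
      (((Finset.range k).image fun i => pos (x i)).sort (· ≤ ·)) := by
  set L := (List.range k).map fun i => pos (x i)
  have chain_of_step : ∀ r : ℕ → ℕ → Prop,
      (∀ i, i + 1 < k → r (pos (x i)) (pos (x (i + 1)))) → L.IsChain r := fun r hr =>
    (List.isChain_map _).2 <| (List.isChain_range _ _).2 fun i hi => hr i (by omega)
  have hsorted : L.Pairwise (· ≤ ·) :=
    List.isChain_iff_pairwise.1 <| chain_of_step _ fun i hi => pos_mono (hdiff i hi).1.le
  have himage : (Finset.range k).image (fun i => pos (x i)) = L.toFinset := by ext; simp [L]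
  rw [himage, hsorted.sort_toFinset_eq_destutter]
  exact (chain_of_step _ fun i hi => pos_sub_pos_mem_D (hdiff i hi).1 (hdiff i hi).2).destutter_ne

theorem stmt_13 (k : ℕ) (x : ℕ → ℕ)
    (hpos : ∀ i < k, 1 ≤ x i)
    (hdiff : ∀ i, i + 1 < k → x i < x (i + 1) ∧ x (i + 1) - x i ∈ D) :
    List.Chain' (fun a b => b - a ∈ D)
      (((Finset.range k).image fun i => pos (x i)).sort (· ≤ ·)) :=
  stmt_13_general k x hdiff
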